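/- Let (I_j)_{j≥1} be pairwise disjoint intervals in ℝ, each of length ≥ 4, and for each j let (I_{j,k})_{k=1}^{n_j} be the dyadic subintervals of the left half of I_j defined by I_{j,k} = (a_j − 2 + 2^k, a_j − 2 + 2^{k+1}] ∩ (a_j, (a_j+b_j)/2], where I_j = (a_j, b_j]. Then the collection (I_{j,k})_{j,k} is well-distributed: there is an absolute constant d such that each doubled interval 2I_{j,k} intersects at most d other doubled intervals 2I_{j',k'} of the collection. -/

import Mathlib

/-!
A doubled piece `2I_{j,k}` lies in `(a_j - 2 + 2^(k-1), a_j - 2 + 3·2^k] ∩ (a_j - 1, b_j]`.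
Hence it meets doubled pieces of its own interval only for `|k - k'| ≤ 2`, and pieces of
another interval `I_{j'}` only when `I_{j'}` ends in `(a_j - 1, a_j]` (then `k' ≥ n_{j'} - 1`,
since the doubled pieces that reach within distance `1` of `b_{j'}` are the last two) or
starts in `[b_j, b_j + 1)` (then `k' = 1`). Disjointness allows at most one interval of each
kind, since it would contain the point `a_j - 1`, resp. `b_j + 1`. So `d = 7` works.
-/

open Set

/-- The doubled interval `2I` of `(u, v]`: same centre, twice the length. -/
def doubledIoc (u v : ℝ) : Set ℝ :=
  Ioc ((u + v) / 2 - (v - u)) ((u + v) / 2 + (v - u))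

/-- The doubled piece `2I_{j,k}` of `I_j = (a, b]`. -/
def doubledDyadicPiece (a b : ℝ) (k : ℕ) : Set ℝ :=
  doubledIoc (a - 2 + 2 ^ k) (min (a - 2 + 2 ^ (k + 1)) ((a + b) / 2))

section Piece

variable {a b a' b' x : ℝ} {k k' n : ℕ}

theorem mem_doubledDyadicPiece_bounds (hx : x ∈ doubledDyadicPiece a b k) :
    a - 2 + 2 ^ k / 2 < x ∧ x ≤ a - 2 + 3 * 2 ^ k ∧ x ≤ (a + b) / 2 + 2 ^ k / 2 := by
  obtain ⟨hlo, hhi⟩ := hx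
  have h₁ := min_le_left (a - 2 + 2 ^ (k + 1)) ((a + b) / 2)
  have h₂ := min_le_right (a - 2 + 2 ^ (k + 1)) ((a + b) / 2)
  have hpow : (2 : ℝ) ^ (k + 1) = 2 * 2 ^ k := by ring
  exact ⟨by linarith, by linarith, by linarith⟩

theorem doubledDyadicPiece_subset_Ioc (hk : 1 ≤ k) (hlen : 4 ≤ b - a)
    (hkb : (2 : ℝ) ^ (k + 1) ≤ b - a + 4) : doubledDyadicPiece a b k ⊆ Ioc (a - 1) b := by
  intro x hx
  obtain ⟨hlo, -, hhi⟩ := mem_doubledDyadicPiece_bounds hx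
  have htwo : (2 : ℝ) ≤ 2 ^ k := by simpa using pow_le_pow_right₀ one_le_two hk
  have hpow : (2 : ℝ) ^ (k + 1) = 2 * 2 ^ k := by ring
  exact ⟨by linarith, by linarith⟩

theorem lt_add_three_of_mem_doubledDyadicPiece (hx : x ∈ doubledDyadicPiece a b k)
    (hx' : x ∈ doubledDyadicPiece a b' k') : k' < k + 3 := by
  obtain ⟨-, hhi, -⟩ := mem_doubledDyadicPiece_bounds hx
  obtain ⟨hlo, -, -⟩ := mem_doubledDyadicPiece_bounds hx'
  have hpow : (2 : ℝ) ^ (k + 3) = 8 * 2 ^ k := by ring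
  have : (2 : ℝ) ^ k' < 2 ^ (k + 3) := by linarith [pow_pos (two_pos : (0 : ℝ) < 2) k]
  exact (pow_lt_pow_iff_right₀ one_lt_two).mp this

theorem le_one_of_mem_doubledDyadicPiece (hx : x ∈ doubledDyadicPiece a b k) (hxa : x ≤ a) :
    k ≤ 1 := by
  obtain ⟨hlo, -, -⟩ := mem_doubledDyadicPiece_bounds hx
  have : (2 : ℝ) ^ k < 2 ^ 2 := by linarith
  exact Nat.lt_succ_iff.mp ((pow_lt_pow_iff_right₀ one_lt_two).mp this)

theorem le_add_one_of_mem_doubledDyadicPiece (hn : (2 : ℝ) ^ (n + 1) ≤ b - a + 4)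
    (hx : x ∈ doubledDyadicPiece a b k) (hbx : b - 1 < x) : n ≤ k + 1 := by
  obtain ⟨-, -, hhi⟩ := mem_doubledDyadicPiece_bounds hx
  by_contra! hkn
  have hpow : (2 : ℝ) ^ (k + 3) ≤ 2 ^ (n + 1) := pow_le_pow_right₀ one_le_two (by omega)
  have hpow' : (2 : ℝ) ^ (k + 3) = 8 * 2 ^ k := by ring
  linarith [one_le_pow₀ (one_le_two : (1 : ℝ) ≤ 2) (n := k)]

end Piece

theorem le_or_le_of_disjoint_Ioc {α : Type*} [LinearOrder α] {a₁ b₁ a₂ b₂ : α}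
    (h₁ : a₁ < b₁) (h₂ : a₂ < b₂) (h : Disjoint (Ioc a₁ b₁) (Ioc a₂ b₂)) :
    b₁ ≤ a₂ ∨ b₂ ≤ a₁ := by
  by_contra! hlt
  exact disjoint_left.mp h ⟨lt_min h₁ hlt.2, min_le_left b₁ b₂⟩
    ⟨lt_min hlt.1 h₂, min_le_right b₁ b₂⟩

theorem exists_forall_mem_imp_eq_of_pairwise_disjoint {ι α : Type*} [Nonempty ι]
    {s : ι → Set α} (hs : Pairwise fun i i' => Disjoint (s i) (s i')) (y : α) :
    ∃ i₀, ∀ i, y ∈ s i → i = i₀ := by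
  by_cases hy : ∃ i, y ∈ s i
  · obtain ⟨i₀, hi₀⟩ := hy
    refine ⟨i₀, fun i hi => ?_⟩
    by_contra hne
    exact disjoint_left.mp (hs hne) hi hi₀
  · exact ⟨Classical.arbitrary ι, fun i hi => (hy ⟨i, hi⟩).elim⟩

theorem exists_card_le_seven_neighbours {ι : Type*} {a b : ι → ℝ} {n : ι → ℕ}
    (hdisj : Pairwise fun i i' => Disjoint (Ioc (a i) (b i)) (Ioc (a i') (b i')))
    (hlen : ∀ i, 4 ≤ b i - a i) (hn : ∀ i, (2 : ℝ) ^ (n i + 1) ≤ b i - a i + 4)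
    (j : ι) (k : ℕ) (hk : 1 ≤ k) (hkn : k ≤ n j) :
    ∃ F : Finset (ι × ℕ), F.card ≤ 7 ∧
      { p : ι × ℕ | p ≠ (j, k) ∧ 1 ≤ p.2 ∧ p.2 ≤ n p.1 ∧
        (doubledDyadicPiece (a p.1) (b p.1) p.2 ∩ doubledDyadicPiece (a j) (b j) k).Nonempty }
        ⊆ F := by
  classical
  have : Nonempty ι := ⟨j⟩
  have hsub : ∀ i m, 1 ≤ m → m ≤ n i → doubledDyadicPiece (a i) (b i) m ⊆ Ioc (a i - 1) (b i) :=
    fun i m hm hmn => doubledDyadicPiece_subset_Ioc hm (hlen i)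
      ((pow_le_pow_right₀ one_le_two (by omega)).trans (hn i))
  obtain ⟨j₁, hj₁⟩ := exists_forall_mem_imp_eq_of_pairwise_disjoint hdisj (a j - 1)
  obtain ⟨j₂, hj₂⟩ := exists_forall_mem_imp_eq_of_pairwise_disjoint hdisj (b j + 1)
  refine ⟨[(j, k - 2), (j, k - 1), (j, k + 1), (j, k + 2), (j₁, n j₁ - 1), (j₁, n j₁), (j₂, 1)]
    |>.toFinset, List.toFinset_card_le _, ?_⟩
  rintro ⟨j', k'⟩ ⟨hne, hk' : 1 ≤ k', hkn' : k' ≤ n j', x, hx', hx⟩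
  obtain ⟨hxa, hxb⟩ := hsub j k hk hkn hx
  obtain ⟨hxa', hxb'⟩ := hsub j' k' hk' hkn' hx'
  by_cases hjj : j' = j
  · subst hjj
    have h₁ := lt_add_three_of_mem_doubledDyadicPiece hx hx'
    have h₂ := lt_add_three_of_mem_doubledDyadicPiece hx' hx
    have h₃ : k' ≠ k := fun h => hne (by rw [h])
    obtain h | h | h | h : k' = k - 2 ∨ k' = k - 1 ∨ k' = k + 1 ∨ k' = k + 2 := by omega
    all_goals simp [h]
  rcases le_or_le_of_disjoint_Ioc (by linarith [hlen j']) (by linarith [hlen j]) (hdisj hjj)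
    with hbelow | habove
  · obtain rfl : j' = j₁ := hj₁ j' ⟨by linarith [hlen j'], by linarith⟩
    have := le_add_one_of_mem_doubledDyadicPiece (hn j') hx' (by linarith)
    obtain h | h : k' = n j' - 1 ∨ k' = n j' := by omega
    all_goals simp [h]
  · obtain rfl : j' = j₂ := hj₂ j' ⟨by linarith, by linarith [hlen j']⟩
    obtain rfl : k' = 1 := by linarith [le_one_of_mem_doubledDyadicPiece hx' (by linarith)]
    simp

/-- The dyadic subintervals `I_{j,k}` of the left halves of a pairwise disjoint family of
intervals `I_j = (a_j, b_j]` (each of length `≥ 4`) form a well-distributed collection: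
there is an absolute constant `d` such that each doubled interval `2I_{j,k}` meets at
most `d` other doubled intervals of the collection. -/
theorem dyadic_collection_well_distributed :
    ∃ d : ℕ, ∀ (a b : ℕ → ℝ),
      (Pairwise fun j j' => Disjoint (Ioc (a j) (b j)) (Ioc (a j') (b j'))) →
      (∀ j, b j - a j ≥ 4) →
      ∀ n : ℕ → ℕ,
        (∀ j, (2 : ℝ) ^ (n j + 1) ≤ b j - a j + 4) →
        (∀ j, ∀ m : ℕ, (2 : ℝ) ^ (m + 1) ≤ b j - a j + 4 → m ≤ n j) →
        -- endpoints of the subinterval `I_{j,k}`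
        ∀ lo hi : ℕ → ℕ → ℝ,
          (∀ j k, lo j k = a j - 2 + 2 ^ k) →
          (∀ j k, hi j k = min (a j - 2 + 2 ^ (k + 1)) ((a j + b j) / 2)) →
          ∀ (j : ℕ) (k : ℕ), 1 ≤ k → k ≤ n j →
            ({ p : ℕ × ℕ | p ≠ (j, k) ∧ 1 ≤ p.2 ∧ p.2 ≤ n p.1 ∧
                (doubledIoc (lo p.1 p.2) (hi p.1 p.2) ∩
                  doubledIoc (lo j k) (hi j k)).Nonempty }).Finite ∧
            ({ p : ℕ × ℕ | p ≠ (j, k) ∧ 1 ≤ p.2 ∧ p.2 ≤ n p.1 ∧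
                (doubledIoc (lo p.1 p.2) (hi p.1 p.2) ∩
                  doubledIoc (lo j k) (hi j k)).Nonempty }).ncard ≤ d := by
  refine ⟨7, fun a b hdisj hlen n hn _ lo hi hlo hhi j k hk hkn => ?_⟩
  have hpiece : ∀ j k, doubledIoc (lo j k) (hi j k) = doubledDyadicPiece (a j) (b j) k :=
    fun j k => by rw [hlo, hhi, doubledDyadicPiece]
  simp only [hpiece]
  obtain ⟨F, hcard, hF⟩ :=
    exists_card_le_seven_neighbours hdisj (fun i => (hlen i).le) hn j k hk hkn
  exact ⟨F.finite_toSet.subset hF,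
    (ncard_le_ncard hF F.finite_toSet).trans ((ncard_coe_finset F).trans_le hcard)⟩
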